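/- If N ≡ 1 (mod 3), the 3-coloring x of BS(1,N) given by x(b^(−j) aᵏ bⁱ) = 2(i − j) + k (mod 3) is frozen: any proper 3-coloring y of the Cayley graph of BS(1,N) that agrees with x outside a finite subset F ⊆ BS(1,N) must equal x everywhere. -/
import Mathlib


/-- The Baumslag–Solitar group `BS(1,N) = ⟨a, b | b a b⁻¹ = aᴺ⟩`. -/
abbrev BSGroup (N : ℕ) : Type :=
  PresentedGroup ({FreeGroup.of true * FreeGroup.of false * (FreeGroup.of true)⁻¹ *
    ((FreeGroup.of false) ^ N)⁻¹} : Set (FreeGroup Bool))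

/-- The generator `a` of `BS(1,N)`. -/
def bsa (N : ℕ) : BSGroup N := PresentedGroup.of false

/-- The generator `b` of `BS(1,N)`. -/
def bsb (N : ℕ) : BSGroup N := PresentedGroup.of true

lemma bs_rel (N : ℕ) : bsb N * bsa N * (bsb N)⁻¹ = (bsa N) ^ N := by
  have h : (PresentedGroup.mk _ (FreeGroup.of true * FreeGroup.of false * (FreeGroup.of true)⁻¹ *
      ((FreeGroup.of false) ^ N)⁻¹) : BSGroup N) = 1 := by
    apply (QuotientGroup.eq_one_iff _).2
    exact Subgroup.subset_normalClosure rfl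
  simp only [map_mul, map_inv, map_pow] at h
  have h2 : bsb N * bsa N * (bsb N)⁻¹ * ((bsa N) ^ N)⁻¹ = 1 := h
  exact mul_inv_eq_one.mp h2

lemma bs_conj_zpow (N : ℕ) (k : ℤ) :
    bsb N * (bsa N) ^ k * (bsb N)⁻¹ = (bsa N) ^ ((N : ℤ) * k) := by
  calc bsb N * (bsa N) ^ k * (bsb N)⁻¹ = (bsb N * bsa N * (bsb N)⁻¹) ^ k := conj_zpow.symm
    _ = ((bsa N) ^ N) ^ k := by rw [bs_rel]
    _ = (bsa N) ^ ((N : ℤ) * k) := by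
        rw [show ((bsa N) ^ N : BSGroup N) = (bsa N) ^ ((N : ℕ) : ℤ) from (zpow_natCast _ _).symm,
          ← zpow_mul]

lemma bs_pow_conj (N : ℕ) (i : ℕ) (k : ℤ) :
    (bsb N) ^ i * (bsa N) ^ k = (bsa N) ^ ((N : ℤ) ^ i * k) * (bsb N) ^ i := by
  induction i generalizing k with
  | zero => simp
  | succ i ih =>
    have : (bsb N) ^ (i + 1) * (bsa N) ^ k = bsb N * ((bsb N) ^ i * (bsa N) ^ k) := by
      rw [pow_succ']; group
    rw [this, ih, ← mul_assoc]
    have hb : bsb N * (bsa N) ^ ((N : ℤ) ^ i * k) =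
        (bsa N) ^ ((N : ℤ) ^ (i + 1) * k) * bsb N := by
      have := bs_conj_zpow N ((N : ℤ) ^ i * k)
      have h2 : bsb N * (bsa N) ^ ((N : ℤ) ^ i * k) = (bsa N) ^ ((N : ℤ) * ((N : ℤ) ^ i * k)) * bsb N := by
        rw [← this]; group
      rw [h2]; ring_nf
    rw [hb, pow_succ']; group

lemma bs_form_mul_a (N : ℕ) (j i : ℕ) (k : ℤ) :
    (bsb N) ^ (-(j : ℤ)) * (bsa N) ^ k * (bsb N) ^ i * bsa N
      = (bsb N) ^ (-(j : ℤ)) * (bsa N) ^ (k + (N : ℤ) ^ i) * (bsb N) ^ i := by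
  have h := bs_pow_conj N i 1
  rw [zpow_one, mul_one] at h
  calc (bsb N) ^ (-(j : ℤ)) * (bsa N) ^ k * (bsb N) ^ i * bsa N
      = (bsb N) ^ (-(j : ℤ)) * (bsa N) ^ k * ((bsb N) ^ i * bsa N) := by group
    _ = (bsb N) ^ (-(j : ℤ)) * (bsa N) ^ k * ((bsa N) ^ ((N : ℤ) ^ i) * (bsb N) ^ i) := by rw [h]
    _ = (bsb N) ^ (-(j : ℤ)) * ((bsa N) ^ k * (bsa N) ^ ((N : ℤ) ^ i)) * (bsb N) ^ i := by group
    _ = (bsb N) ^ (-(j : ℤ)) * (bsa N) ^ (k + (N : ℤ) ^ i) * (bsb N) ^ i := by rw [← zpow_add]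

lemma bs_form_mul_ainv (N : ℕ) (j i : ℕ) (k : ℤ) :
    (bsb N) ^ (-(j : ℤ)) * (bsa N) ^ k * (bsb N) ^ i * (bsa N)⁻¹
      = (bsb N) ^ (-(j : ℤ)) * (bsa N) ^ (k - (N : ℤ) ^ i) * (bsb N) ^ i := by
  have h := bs_pow_conj N i (-1)
  rw [zpow_neg_one, mul_neg_one] at h
  calc (bsb N) ^ (-(j : ℤ)) * (bsa N) ^ k * (bsb N) ^ i * (bsa N)⁻¹
      = (bsb N) ^ (-(j : ℤ)) * (bsa N) ^ k * ((bsb N) ^ i * (bsa N)⁻¹) := by group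
    _ = (bsb N) ^ (-(j : ℤ)) * (bsa N) ^ k * ((bsa N) ^ (-((N : ℤ) ^ i)) * (bsb N) ^ i) := by rw [h]
    _ = (bsb N) ^ (-(j : ℤ)) * ((bsa N) ^ k * (bsa N) ^ (-((N : ℤ) ^ i))) * (bsb N) ^ i := by group
    _ = (bsb N) ^ (-(j : ℤ)) * (bsa N) ^ (k - (N : ℤ) ^ i) * (bsb N) ^ i := by
        rw [← zpow_add]; ring_nf

lemma bs_form_mul_binv0 (N : ℕ) (j : ℕ) (k : ℤ) :
    (bsb N) ^ (-(j : ℤ)) * (bsa N) ^ k * (bsb N)⁻¹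
      = (bsb N) ^ (-((j + 1 : ℕ) : ℤ)) * (bsa N) ^ ((N : ℤ) * k) * (bsb N) ^ (0 : ℕ) := by
  rw [← bs_conj_zpow]
  push_cast
  rw [neg_add, zpow_add]
  group

lemma bs_reduce_step (N : ℕ) (j m : ℕ) (k : ℤ) :
    (bsb N) ^ (-((j + 1 : ℕ) : ℤ)) * (bsa N) ^ ((N : ℤ) * k) * (bsb N) ^ (m + 1)
      = (bsb N) ^ (-(j : ℤ)) * (bsa N) ^ k * (bsb N) ^ m := by
  rw [← bs_conj_zpow]
  push_cast
  rw [neg_add, zpow_add, pow_succ']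
  group

lemma bs_exists_form (N : ℕ) (g : BSGroup N) : ∃ (j i : ℕ) (k : ℤ),
    g = (bsb N) ^ (-(j : ℤ)) * (bsa N) ^ k * (bsb N) ^ i := by
  have hg : g ∈ Subgroup.closure (Set.range (PresentedGroup.of :
      Bool → BSGroup N)) := by
    rw [PresentedGroup.closure_range_of]; trivial
  induction hg using Subgroup.closure_induction_right with
  | one => exact ⟨0, 0, 0, by simp⟩
  | mul_right z hz t ht ih =>
    obtain ⟨j, i, k, rfl⟩ := ih
    obtain ⟨u, rfl⟩ := ht
    cases u with
    | false => exact ⟨j, i, k + (N : ℤ) ^ i, bs_form_mul_a N j i k⟩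
    | true =>
      refine ⟨j, i + 1, k, ?_⟩
      rw [pow_succ, ← mul_assoc]
      rfl
  | mul_inv_cancel z hz t ht ih =>
    obtain ⟨j, i, k, rfl⟩ := ih
    obtain ⟨u, rfl⟩ := ht
    cases u with
    | false => exact ⟨j, i, k - (N : ℤ) ^ i, bs_form_mul_ainv N j i k⟩
    | true =>
      cases i with
      | zero =>
        refine ⟨j + 1, 0, (N : ℤ) * k, ?_⟩
        rw [← bs_form_mul_binv0]
        simp [bsb]
      | succ m =>
        refine ⟨j, m, k, ?_⟩
        rw [show (PresentedGroup.of true : BSGroup N) = bsb N from rfl, pow_succ]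
        group

lemma bs_reduce (N : ℕ) : ∀ (j i : ℕ) (k : ℤ), ∃ (j' i' : ℕ) (k' : ℤ),
    (¬ (N : ℤ) ∣ k' ∨ i' = 0 ∨ j' = 0) ∧
    (bsb N) ^ (-(j' : ℤ)) * (bsa N) ^ k' * (bsb N) ^ i'
      = (bsb N) ^ (-(j : ℤ)) * (bsa N) ^ k * (bsb N) ^ i := by
  intro j
  induction j with
  | zero => exact fun i k => ⟨0, i, k, Or.inr (Or.inr rfl), rfl⟩
  | succ j ih =>
    intro i k
    by_cases hdvd : (N : ℤ) ∣ k
    · cases i with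
      | zero => exact ⟨j + 1, 0, k, Or.inr (Or.inl rfl), rfl⟩
      | succ m =>
        obtain ⟨k', rfl⟩ := hdvd
        obtain ⟨j', i', k'', hc, heq⟩ := ih m k'
        exact ⟨j', i', k'', hc, heq.trans (bs_reduce_step N j m k').symm⟩
    · exact ⟨j + 1, i, k, Or.inl hdvd, rfl⟩

lemma bs_exists_nf (N : ℕ) (g : BSGroup N) : ∃ (j i : ℕ) (k : ℤ),
    (¬ (N : ℤ) ∣ k ∨ i = 0 ∨ j = 0) ∧
    g = (bsb N) ^ (-(j : ℤ)) * (bsa N) ^ k * (bsb N) ^ i := by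
  obtain ⟨j, i, k, rfl⟩ := bs_exists_form N g
  obtain ⟨j', i', k', hc, heq⟩ := bs_reduce N j i k
  exact ⟨j', i', k', hc, heq.symm⟩

lemma bs_cast3 (N : ℕ) (h3 : N % 3 = 1) : ((N : ℕ) : ZMod 3) = 1 := by
  rw [← ZMod.natCast_mod N 3, h3, Nat.cast_one]

lemma bs_xa (N : ℕ) (h3 : N % 3 = 1) (x : BSGroup N → ZMod 3)
    (hx : ∀ (j i : ℕ) (k : ℤ), (¬ (N : ℤ) ∣ k ∨ i = 0 ∨ j = 0) →
      x ((bsb N) ^ (-(j : ℤ)) * (bsa N) ^ k * (bsb N) ^ i) =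
        2 * ((i : ZMod 3) - (j : ZMod 3)) + (k : ZMod 3)) (g : BSGroup N) :
    x (g * bsa N) = x g + 1 := by
  obtain ⟨j, i, k, hc, rfl⟩ := bs_exists_nf N g
  rw [bs_form_mul_a]
  have hc' : (¬ (N : ℤ) ∣ (k + (N : ℤ) ^ i) ∨ i = 0 ∨ j = 0) := by
    rcases hc with h | h | h
    · cases i with
      | zero => exact Or.inr (Or.inl rfl)
      | succ m =>
        refine Or.inl (fun hd => h ?_)
        have hdp : (N : ℤ) ∣ (N : ℤ) ^ (m + 1) := dvd_pow_self _ (Nat.succ_ne_zero m)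
        exact (dvd_add_right hdp).mp (by rwa [add_comm] at hd)
    · exact Or.inr (Or.inl h)
    · exact Or.inr (Or.inr h)
  rw [hx j i _ hc', hx j i k hc]
  push_cast
  rw [bs_cast3 N h3]
  ring

lemma bs_xb (N : ℕ) (h3 : N % 3 = 1) (x : BSGroup N → ZMod 3)
    (hx : ∀ (j i : ℕ) (k : ℤ), (¬ (N : ℤ) ∣ k ∨ i = 0 ∨ j = 0) →
      x ((bsb N) ^ (-(j : ℤ)) * (bsa N) ^ k * (bsb N) ^ i) =
        2 * ((i : ZMod 3) - (j : ZMod 3)) + (k : ZMod 3)) (g : BSGroup N) :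
    x (g * bsb N) = x g + 2 := by
  obtain ⟨j, i, k, hc, rfl⟩ := bs_exists_nf N g
  have hstep : (bsb N) ^ (-(j : ℤ)) * (bsa N) ^ k * (bsb N) ^ i * bsb N
      = (bsb N) ^ (-(j : ℤ)) * (bsa N) ^ k * (bsb N) ^ (i + 1) := by
    rw [pow_succ, ← mul_assoc]
  by_cases hgood : ¬ (N : ℤ) ∣ k ∨ j = 0
  · have hc' : (¬ (N : ℤ) ∣ k ∨ i + 1 = 0 ∨ j = 0) := by
      rcases hgood with h | h
      · exact Or.inl h
      · exact Or.inr (Or.inr h)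
    rw [hstep, hx j (i + 1) k hc', hx j i k hc]
    push_cast
    ring
  · push_neg at hgood
    obtain ⟨hdvd, hj⟩ := hgood
    have hi : i = 0 := by
      rcases hc with h | h | h
      · exact absurd hdvd h
      · exact h
      · exact absurd h hj
    obtain ⟨m, rfl⟩ : ∃ m, j = m + 1 := ⟨j - 1, by omega⟩
    obtain ⟨k', rfl⟩ := hdvd
    subst hi
    have heq : (bsb N) ^ (-((m + 1 : ℕ) : ℤ)) * (bsa N) ^ ((N : ℤ) * k') * (bsb N) ^ (0 : ℕ) * bsb N
        = (bsb N) ^ (-(m : ℤ)) * (bsa N) ^ k' * (bsb N) ^ (0 : ℕ) := by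
      rw [hstep, bs_reduce_step N m 0 k']
    rw [heq, hx m 0 k' (Or.inr (Or.inl rfl)), hx (m + 1) 0 ((N : ℤ) * k') (Or.inr (Or.inl rfl))]
    push_cast
    rw [bs_cast3 N h3]
    ring


def bsHeight (N : ℕ) : BSGroup N →* Multiplicative ℤ :=
  PresentedGroup.toGroup (f := fun t => cond t (Multiplicative.ofAdd 1) 1) (by
    intro r hr
    rw [Set.mem_singleton_iff] at hr
    subst hr
    simp only [map_mul, map_inv, map_pow, FreeGroup.lift_apply_of, cond_true, cond_false]
    group)

lemma bsHeight_a (N : ℕ) : bsHeight (N := N) (bsa N) = 1 :=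
  PresentedGroup.toGroup.of _

lemma bsHeight_b (N : ℕ) : bsHeight (N := N) (bsb N) = Multiplicative.ofAdd 1 :=
  PresentedGroup.toGroup.of _

lemma bs_addRight_pow (n : ℕ) (z : ℚ) :
    ((Equiv.addRight (1 : ℚ)) ^ n) z = z + n := by
  induction n generalizing z with
  | zero => simp
  | succ n ih =>
    rw [pow_succ', Equiv.Perm.mul_apply, ih]
    push_cast
    have : (Equiv.addRight (1 : ℚ)) (z + ↑n) = z + ↑n + 1 := rfl
    rw [this]
    ring

lemma bs_perm_rel (N : ℕ) (h0 : (N : ℚ) ≠ 0) :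
    Equiv.mulLeft₀ (N : ℚ) h0 * Equiv.addRight (1 : ℚ) * (Equiv.mulLeft₀ (N : ℚ) h0)⁻¹
      = (Equiv.addRight (1 : ℚ)) ^ N := by
  ext z
  rw [Equiv.Perm.mul_apply, Equiv.Perm.mul_apply, bs_addRight_pow]
  simp only [Equiv.Perm.inv_def, Equiv.mulLeft₀_symm_apply, Equiv.coe_addRight,
    Equiv.mulLeft₀_apply]
  field_simp

def bsPerm (N : ℕ) (h0 : (N : ℚ) ≠ 0) : BSGroup N →* Equiv.Perm ℚ :=
  PresentedGroup.toGroup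
    (f := fun t => cond t (Equiv.mulLeft₀ (N : ℚ) h0) (Equiv.addRight (1 : ℚ))) (by
    intro r hr
    rw [Set.mem_singleton_iff] at hr
    subst hr
    simp only [map_mul, map_inv, map_pow, FreeGroup.lift_apply_of, cond_true, cond_false]
    rw [mul_inv_eq_one, bs_perm_rel])

lemma bsPerm_a (N : ℕ) (h0 : (N : ℚ) ≠ 0) :
    bsPerm N h0 (bsa N) = Equiv.addRight (1 : ℚ) :=
  PresentedGroup.toGroup.of _

lemma bs_a_pow_inj (N : ℕ) (hN2 : 2 ≤ N) {n m : ℕ} (h : (bsa N) ^ n = (bsa N) ^ m) :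
    n = m := by
  have h0 : (N : ℚ) ≠ 0 := Nat.cast_ne_zero.mpr (by omega)
  have h2 := congrArg (bsPerm N h0) h
  rw [map_pow, map_pow, bsPerm_a] at h2
  have h3 := congrArg (fun f : Equiv.Perm ℚ => f 0) h2
  simp only [bs_addRight_pow, zero_add] at h3
  exact_mod_cast h3

/-- If `N ≡ 1 (mod 3)`, the 3-coloring of `BS(1,N)` given on normal forms by
`x(b^(−j) aᵏ bⁱ) = 2(i − j) + k (mod 3)` is frozen: any proper 3-coloring `y` of the Cayley
graph agreeing with `x` outside a finite set `F` equals `x` everywhere. -/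
theorem stmt14 (N : ℕ) (hN : 2 ≤ N) (h3 : N % 3 = 1)
    (x : BSGroup N → ZMod 3)
    (hx : ∀ (j i : ℕ) (k : ℤ), (¬ (N : ℤ) ∣ k ∨ i = 0 ∨ j = 0) →
      x ((bsb N) ^ (-(j : ℤ)) * (bsa N) ^ k * (bsb N) ^ i) =
        2 * ((i : ZMod 3) - (j : ZMod 3)) + (k : ZMod 3))
    (y : BSGroup N → ZMod 3)
    (hy : ∀ g : BSGroup N, y (g * bsa N) ≠ y g ∧ y (g * bsb N) ≠ y g)
    (F : Set (BSGroup N)) (hF : F.Finite) (hagree : ∀ g ∉ F, y g = x g) :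
    y = x := by

  have hxa := bs_xa N h3 x hx
  have hxb := bs_xb N h3 x hx
  by_contra hne
  obtain ⟨g₀, hg₀⟩ := Function.ne_iff.mp hne
  set T : Set (BSGroup N) := {g | y g ≠ x g} with hT
  have hTF : T ⊆ F := fun g hg => by
    by_contra hgF
    exact hg (hagree g hgF)
  have hTfin : T.Finite := hF.subset hTF
  set h : BSGroup N → ℤ := fun g => Multiplicative.toAdd (bsHeight N g) with hh
  have hmul : ∀ g₁ g₂ : BSGroup N, h (g₁ * g₂) = h g₁ + h g₂ := by
    intro g₁ g₂; simp [hh, map_mul]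
  have ha_h : ∀ g', h (g' * bsa N) = h g' := by
    intro g'; rw [hmul]; simp [hh, bsHeight_a]
  have hb_h : ∀ g', h (g' * bsb N) = h g' + 1 := by
    intro g'; rw [hmul]; simp [hh, bsHeight_b]
  have hg₀T : g₀ ∈ T := hg₀
  have hSne : (hTfin.toFinset.image h).Nonempty :=
    ⟨h g₀, Finset.mem_image_of_mem h (hTfin.mem_toFinset.2 hg₀T)⟩
  set H := (hTfin.toFinset.image h).max' hSne with hH
  have hmax : ∀ g', g' ∈ T → h g' ≤ H := fun g' hg' =>
    Finset.le_max' _ _ (Finset.mem_image_of_mem h (hTfin.mem_toFinset.2 hg'))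
  obtain ⟨g, hgT, hgH⟩ : ∃ g, g ∈ T ∧ h g = H := by
    obtain ⟨g, hg, hgh⟩ := Finset.mem_image.1 ((hTfin.toFinset.image h).max'_mem hSne)
    exact ⟨g, hTfin.mem_toFinset.1 hg, hgh⟩
  have key : ∀ g', h g' = H → g' ∈ T → g' * bsa N ∈ T := by
    intro g' hH' hT'
    have hbnot : g' * bsb N ∉ T := by
      intro hmem
      have := hmax _ hmem
      rw [hb_h, hH'] at this
      omega
    have hyb : y (g' * bsb N) = x g' + 2 := by
      have hxe : y (g' * bsb N) = x (g' * bsb N) := not_not.1 hbnot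
      rw [hxe, hxb]
    have h2 : y g' ≠ x g' + 2 := by
      rw [← hyb]
      exact fun he => (hy g').2 he.symm
    have h0 : y g' ≠ x g' := hT'
    have h1 : y g' = x g' + 1 := by
      have htriv : ∀ u v : ZMod 3, u ≠ v → u ≠ v + 2 → u = v + 1 := by decide
      exact htriv _ _ h0 h2
    show y (g' * bsa N) ≠ x (g' * bsa N)
    rw [hxa, ← h1]
    exact (hy g').1
  have hall : ∀ n : ℕ, g * (bsa N) ^ n ∈ T ∧ h (g * (bsa N) ^ n) = H := by
    intro n
    induction n with
    | zero => simpa using ⟨hgT, hgH⟩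
    | succ n ih =>
      have hstep : g * (bsa N) ^ (n + 1) = g * (bsa N) ^ n * bsa N := by
        rw [pow_succ, ← mul_assoc]
      rw [hstep]
      exact ⟨key _ ih.2 ih.1, by rw [ha_h]; exact ih.2⟩
  have hinj : Function.Injective fun n : ℕ => g * (bsa N) ^ n := by
    intro n m hnm
    simp only at hnm
    exact bs_a_pow_inj N hN (mul_left_cancel hnm)
  exact absurd (Set.infinite_of_injective_forall_mem hinj fun n => (hall n).1)
    (Set.not_infinite.2 hTfin)
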